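/- Let G be a k-regular simple graph with chromatic number χ. Then the smallest adjacency eigenvalue λ of G satisfies λ ≤ -k/(χ - 1). -/

import Mathlib

/-!
Hoffman's bound via the Rayleigh quotient. For a proper colouring `c : V → α` with `m = |α|`
colours, put `x_i = m · 1_{c⁻¹(i)} - 1`. Then `∑_i x_i(v) x_i(w)` equals `m(m - 1)` if
`c v = c w` and `-m` otherwise, so summing the Rayleigh inequalities `λ ‖x_i‖² ≤ x_iᵀ A x_i`
over `i` gives `λ · n m (m - 1) ≤ -m k n`, since every edge joins different colour classes and
each row of `A` sums to `k`.
-/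

/-- The smallest eigenvalue of a real symmetric matrix. -/
noncomputable def minEig {n : Type*} [Fintype n] [DecidableEq n] (hn : Nonempty n)
    {A : Matrix n n ℝ} (hA : A.IsHermitian) : ℝ :=
  Finset.univ.inf' (Finset.univ_nonempty_iff.mpr hn) hA.eigenvalues

/-- The adjacency matrix of a graph is Hermitian. -/
lemma adjHerm {V : Type*} [Fintype V] (G : SimpleGraph V) [DecidableRel G.Adj] :
    (G.adjMatrix ℝ).IsHermitian := by
  ext i j
  simp [Matrix.conjTranspose_apply, SimpleGraph.adj_comm]

open Matrix Finset

section MinEig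

variable {n : Type*} [Fintype n] [DecidableEq n] (hn : Nonempty n) {A : Matrix n n ℝ}
  (hA : A.IsHermitian)

open scoped MatrixOrder in
lemma posSemidef_sub_minEig_smul_one : (A - minEig hn hA • (1 : Matrix n n ℝ)).PosSemidef := by
  have h : algebraMap ℝ (Matrix n n ℝ) (minEig hn hA) ≤ A := by
    refine algebraMap_le_of_le_spectrum (fun x hx => ?_) hA.isSelfAdjoint
    obtain ⟨i, rfl⟩ := hA.spectrum_real_eq_range_eigenvalues ▸ hx
    exact inf'_le _ (mem_univ i)
  rwa [Matrix.le_iff, Algebra.algebraMap_eq_smul_one] at h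

lemma minEig_mul_dotProduct_self_le (x : n → ℝ) :
    minEig hn hA * (x ⬝ᵥ x) ≤ x ⬝ᵥ (A *ᵥ x) := by
  have h := (posSemidef_sub_minEig_smul_one hn hA).dotProduct_mulVec_nonneg x
  simp only [star_trivial, sub_mulVec, smul_mulVec, one_mulVec, dotProduct_sub, dotProduct_smul,
    smul_eq_mul] at h
  linarith

end MinEig

lemma sum_dotProduct_mulVec {ι n R : Type*} [Fintype ι] [Fintype n] [CommSemiring R]
    (A : Matrix n n R) (x : ι → n → R) :
    ∑ i, x i ⬝ᵥ (A *ᵥ x i) = ∑ v, ∑ w, A v w * ∑ i, x i v * x i w := by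
  simp only [dotProduct, mulVec, mul_sum]
  rw [sum_comm]
  refine sum_congr rfl fun v _ => ?_
  rw [sum_comm]
  exact sum_congr rfl fun w _ => sum_congr rfl fun i _ => by ring

section ColorClassVec

variable {V α : Type*} [Fintype α] [DecidableEq α]

def colorClassVec (c : V → α) (i : α) : V → ℝ :=
  fun v => (if c v = i then (Fintype.card α : ℝ) else 0) - 1

lemma sum_colorClassVec_mul (c : V → α) (v w : V) :
    ∑ i, colorClassVec c i v * colorClassVec c i w
      = (Fintype.card α : ℝ) * ((if c v = c w then (Fintype.card α : ℝ) else 0) - 1) := by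
  simp [colorClassVec, sub_mul, mul_sub, ite_mul, mul_ite, sum_sub_distrib, sum_ite_eq]

lemma sum_colorClassVec_dotProduct_self [Fintype V] (c : V → α) :
    ∑ i, colorClassVec c i ⬝ᵥ colorClassVec c i
      = Fintype.card V * ((Fintype.card α : ℝ) * (Fintype.card α - 1)) := by
  simp only [dotProduct]
  rw [sum_comm]
  simp [sum_colorClassVec_mul]

variable [Fintype V] {G : SimpleGraph V} [DecidableRel G.Adj]

lemma sum_colorClassVec_dotProduct_adjMatrix_mulVec {k : ℕ} (hreg : G.IsRegularOfDegree k)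
    (C : G.Coloring α) :
    ∑ i, colorClassVec C i ⬝ᵥ (G.adjMatrix ℝ *ᵥ colorClassVec C i)
      = -(Fintype.card α * k * Fintype.card V) := by
  have hterm : ∀ v w, G.adjMatrix ℝ v w * ∑ i, colorClassVec C i v * colorClassVec C i w
      = -(Fintype.card α * G.adjMatrix ℝ v w) := by
    intro v w
    by_cases h : G.Adj v w
    · simp [sum_colorClassVec_mul, C.valid h]
    · simp [h]
  simp only [sum_dotProduct_mulVec, hterm, sum_neg_distrib, ← mul_sum]
  have hrow : ∀ v, ∑ w, G.adjMatrix ℝ v w = k := fun v => by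
    simpa [mulVec, dotProduct] using
      G.adjMatrix_mulVec_const_apply_of_regular (a := (1 : ℝ)) hreg (v := v)
  simp only [hrow, sum_const, card_univ, nsmul_eq_mul]
  ring

end ColorClassVec

lemma minEig_adjMatrix_mul_card_sub_one_le {V α : Type*} [Fintype V] [DecidableEq V]
    [Fintype α] [DecidableEq α] (hV : Nonempty V) {G : SimpleGraph V} [DecidableRel G.Adj]
    {k : ℕ} (hreg : G.IsRegularOfDegree k) (C : G.Coloring α) :
    minEig hV (adjHerm G) * (Fintype.card α - 1) ≤ -k := by
  have hsum := sum_le_sum fun i (_ : i ∈ univ) =>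
    minEig_mul_dotProduct_self_le hV (adjHerm G) (colorClassVec C i)
  rw [← mul_sum, sum_colorClassVec_dotProduct_self,
    sum_colorClassVec_dotProduct_adjMatrix_mulVec hreg] at hsum
  have : Nonempty α := hV.map C
  have hpos : (0 : ℝ) < Fintype.card V * Fintype.card α := by positivity
  refine le_of_mul_le_mul_right ?_ hpos
  linarith

theorem stmt16_general {V : Type*} [Fintype V] [DecidableEq V] (hV : Nonempty V)
    (G : SimpleGraph V) [DecidableRel G.Adj] (k : ℕ) (hreg : G.IsRegularOfDegree k)
    (hedge : ∃ u v : V, G.Adj u v)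
    (χ : ℕ) (hχ : G.chromaticNumber = χ) :
    minEig hV (adjHerm G) ≤ -(k : ℝ) / ((χ : ℝ) - 1) := by
  obtain ⟨u, v, huv⟩ := hedge
  have two_le_χ : (2 : ℝ) ≤ χ := by exact_mod_cast hχ ▸ G.two_le_chromaticNumber_of_adj huv
  obtain ⟨C⟩ : G.Colorable χ := by
    rw [← SimpleGraph.chromaticNumber_le_iff_colorable, hχ]
  rw [le_div_iff₀ (by linarith)]
  simpa using minEig_adjMatrix_mul_card_sub_one_le hV hreg C

/-- If `G` is a connected `k`-regular simple graph with at least one edge and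
chromatic number `χ`, then its smallest adjacency eigenvalue `λ` satisfies
`λ ≤ -k/(χ - 1)`. -/
theorem stmt16 {V : Type*} [Fintype V] [DecidableEq V] (hV : Nonempty V)
    (G : SimpleGraph V) [DecidableRel G.Adj] (k : ℕ) (hreg : G.IsRegularOfDegree k)
    (hconn : G.Connected) (hedge : ∃ u v : V, G.Adj u v)
    (χ : ℕ) (hχ : G.chromaticNumber = χ) :
    minEig hV (adjHerm G) ≤ -(k : ℝ) / ((χ : ℝ) - 1) :=
  stmt16_general hV G k hreg hedge χ hχ
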